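/- arXiv:2403.12256 — 2 statements merged into one kernel-verified Lean document; each statement's English description precedes it below -/
import Mathlib

section
/- Suppose every correct vertex forwards a message unchanged and at most one vertex is faulty. If the target receives message m_L along a path P_L consisting (apart from endpoints) only of vertices not on P_R, and message m_R along P_R consisting only of vertices not on P_L, both paths originating at the correct source s which sent message m_s, and m_L = m_R, then m_L = m_s. -/
def InternallyDisjoint {V : Type*} {G : SimpleGraph V} {s t : V}
    (p q : G.Walk s t) : Prop :=
  ∀ x, x ∈ p.support → x ∈ q.support → x = s ∨ x = t

/-- A walk transmits faithfully iff all its internal vertices are correct. -/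
def Faithful {V : Type*} {G : SimpleGraph V} {s t : V}
    (correct : V → Prop) (p : G.Walk s t) : Prop :=
  ∀ x ∈ p.support, x ≠ s → x ≠ t → correct x

theorem stmt6 {V : Type*} [Fintype V] (G : SimpleGraph V) (s t : V) (hst : s ≠ t)
    (correct : V → Prop)
    -- at most one vertex is faulty
    (hone : {v : V | ¬ correct v}.Subsingleton)
    (hs : correct s) (ht : correct t)
    {M : Type*} [DecidableEq M] (ms mL mR : M)
    (PL PR : G.Walk s t) (hPL : PL.IsPath) (hPR : PR.IsPath)
    -- internal vertices of each path do not lie on the other path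
    (hLR : ∀ x ∈ PL.support, x ≠ s → x ≠ t → x ∉ PR.support)
    (hRL : ∀ x ∈ PR.support, x ≠ s → x ≠ t → x ∉ PL.support)
    -- a path all of whose internal vertices are correct forwards the
    -- source's message `ms` unchanged
    (hfaithL : Faithful correct PL → mL = ms)
    (hfaithR : Faithful correct PR → mR = ms)
    (heq : mL = mR) :
    mL = ms := by
  by_cases hL : Faithful correct PL
  · exact hfaithL hL
  · -- some internal vertex of PL is faulty
    simp only [Faithful, not_forall] at hL
    obtain ⟨x, hxs, hxns, hxnt, hxf⟩ := hL
    have hR : Faithful correct PR := by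
      intro y hy hys hyt
      by_contra hyf
      have : x = y := hone hxf hyf
      exact hLR x hxs hxns hxnt (this ▸ hy)
    rw [heq]
    exact hfaithR hR
end

section
/- Suppose the target delivers a message only when it receives the same message m along two internally vertex-disjoint s–t paths, or along one s–t path P and a family of s–t paths {Q_k} where Q_k avoids k for each internal vertex k of P. If at most one vertex f is faulty, s and t are correct, faulty-free paths transmit faithfully, and any path containing f may transmit an arbitrary message, then every delivered message equals the source message m_s (validity). -/
/-- Validity: any message delivered by the target (via two matching disjoint
cores, or via a matching core and braid) equals the source message. -/
theorem stmt11 {V : Type*} [Fintype V] (G : SimpleGraph V) (s t : V) (hst : s ≠ t)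
    (correct : V → Prop) (f : V)
    -- at most one vertex is faulty, namely `f`
    (hone : ∀ v, ¬ correct v → v = f)
    (hs : correct s) (ht : correct t)
    {M : Type*} (ms m : M)
    -- `carried R` is the message the target receives along walk `R`;
    -- fault-free paths transmit faithfully, carrying the source message,
    -- while a path containing `f` may carry an arbitrary message
    (carried : G.Walk s t → M)
    (hfaithful : ∀ R : G.Walk s t, R.IsPath → Faithful correct R → carried R = ms)
    -- delivery condition: either two matching internally disjoint cores ...
    (hdeliver :
      (∃ P Q : G.Walk s t, P.IsPath ∧ Q.IsPath ∧ InternallyDisjoint P Q ∧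
        carried P = m ∧ carried Q = m) ∨
      -- ... or a core P with a matching braid {Q k}
      (∃ (P : G.Walk s t) (Q : V → G.Walk s t), P.IsPath ∧
        (∀ k ∈ P.support, k ≠ s → k ≠ t → (Q k).IsPath ∧ k ∉ (Q k).support) ∧
        carried P = m ∧
        (∀ k ∈ P.support, k ≠ s → k ≠ t → carried (Q k) = m) ∧
        -- if f is an internal vertex of P, the thread Q f (avoiding f)
        -- transmits faithfully
        (f ∈ P.support → f ≠ s → f ≠ t → Faithful correct (Q f)))) :
    m = ms := by
  have key : ∀ R : G.Walk s t, R.IsPath → (∀ x ∈ R.support, x ≠ s → x ≠ t → x ≠ f) →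
      carried R = ms := by
    intro R hR hav
    exact hfaithful R hR (fun x hx hxs hxt => by
      by_contra hc
      exact hav x hx hxs hxt (hone x hc))
  rcases hdeliver with ⟨P, Q, hP, hQ, hdisj, hcP, hcQ⟩ | ⟨P, Q, hP, hQprop, hcP, hcQ, hbraid⟩
  · by_cases hfP : f ∈ P.support ∧ f ≠ s ∧ f ≠ t
    · -- f internal to P, so f not internal to Q
      rw [← hcQ]
      apply key Q hQ
      intro x hx hxs hxt he
      subst he
      rcases hdisj x hfP.1 hx with h | h
      · exact hfP.2.1 h
      · exact hfP.2.2 h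
    · rw [← hcP]
      apply key P hP
      intro x hx hxs hxt he
      subst he
      exact hfP ⟨hx, hxs, hxt⟩
  · by_cases hfP : f ∈ P.support ∧ f ≠ s ∧ f ≠ t
    · rw [← hcQ f hfP.1 hfP.2.1 hfP.2.2]
      exact hfaithful (Q f) (hQprop f hfP.1 hfP.2.1 hfP.2.2).1
        (hbraid hfP.1 hfP.2.1 hfP.2.2)
    · rw [← hcP]
      apply key P hP
      intro x hx hxs hxt he
      subst he
      exact hfP ⟨hx, hxs, hxt⟩
end
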